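/- arXiv:1412.8764 — 3 statements merged into one kernel-verified Lean document; each statement's English description precedes it below -/
import Mathlib

section
/- Let C : ℝ → ℝ be any function and let γ₀ > 0. Then there exist sequences (β_j)_{j≥1} and (u_j)_{j≥1} of real numbers such that: (1) (β_j) is nondecreasing with β_j > 0 for all j and β_j → ∞, and (u_j) is nonincreasing with 0 < u_j < 1 for all j and u_j → 0; (2) β_{j+1} − β_j → 0 as j → ∞; (3) for each fixed integer k ≥ 1, β_{j·k} / (∑_{i=1}^{j} β_i) → 0 as j → ∞; (4) C(u_j) ≤ exp(γ₀ · β_j · u_j) for every j ≥ 1; (5) β_j · u_j → ∞ as j → ∞. -/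
/-!
Take `β_j = √j + b`. Its increments vanish, and since `∑_{i ≤ j} β_i ≥ j β_1` while
`β_{jk} = O(√j)`, the ratios in (3) vanish too. For `u`, the value `1/(m+2)` is admissible at
`j` as soon as `β_j ≥ T_m := (m+2) · max (log C(1/(m+2)) / γ₀) m`; taking for `m_j` the largest
admissible `m ≤ j` and `u_j = 1/(m_j+2)`, the index `m_j` is monotone because `β` is, tends
to `∞` because `β` does, and `β_j u_j ≥ m_j`. A shift `b ≥ T_0` makes `m = 0` always admissible.
-/

open Filter Topology

lemma exists_monotone_tendsto_atTop_forall_le {α : Type*} [Preorder α] {β : ℕ → α}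
    (hβ : Monotone β) (hβ_top : Tendsto β atTop atTop) (T : ℕ → α) (hT : ∀ j, T 0 ≤ β j) :
    ∃ m : ℕ → ℕ, Monotone m ∧ Tendsto m atTop atTop ∧ ∀ j, T (m j) ≤ β j := by
  classical
  refine ⟨fun j => Nat.findGreatest (fun n => T n ≤ β j) j, fun j k hjk => ?_, ?_, fun j => ?_⟩
  · exact Nat.findGreatest_mono (fun n hn => hn.trans (hβ hjk)) hjk
  · refine tendsto_atTop.2 fun n => ?_
    filter_upwards [hβ_top.eventually_ge_atTop (T n), eventually_ge_atTop n] with j hTn hnj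
    exact Nat.le_findGreatest hnj hTn
  · exact Nat.findGreatest_spec (P := fun n => T n ≤ β j) (Nat.zero_le j) (hT j)

lemma tendsto_sqrt_natCast_atTop : Tendsto (fun n : ℕ => √(n : ℝ)) atTop atTop :=
  Real.tendsto_sqrt_atTop.comp tendsto_natCast_atTop_atTop

lemma sqrt_succ_sub_sqrt (n : ℕ) :
    √((n + 1 : ℕ) : ℝ) - √(n : ℝ) = (√((n + 1 : ℕ) : ℝ) + √(n : ℝ))⁻¹ := by
  refine eq_inv_of_mul_eq_one_left ?_
  rw [mul_comm, ← sq_sub_sq, Real.sq_sqrt (by positivity), Real.sq_sqrt (by positivity)]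
  push_cast; ring

lemma tendsto_sqrt_succ_sub_sqrt :
    Tendsto (fun n : ℕ => √((n + 1 : ℕ) : ℝ) - √(n : ℝ)) atTop (𝓝 0) := by
  simp_rw [sqrt_succ_sub_sqrt]
  exact ((tendsto_sqrt_natCast_atTop.comp (tendsto_add_atTop_nat 1)).atTop_add_atTop
    tendsto_sqrt_natCast_atTop).inv_tendsto_atTop

lemma tendsto_sqrt_add_const_div_self (b : ℝ) :
    Tendsto (fun n : ℕ => (√(n : ℝ) + b) / n) atTop (𝓝 0) := by
  have h : Tendsto (fun n : ℕ => (√(n : ℝ))⁻¹ + b / n) atTop (𝓝 (0 + 0)) :=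
    tendsto_sqrt_natCast_atTop.inv_tendsto_atTop.add (tendsto_const_div_atTop_nhds_zero_nat b)
  rw [add_zero] at h
  refine h.congr fun n => ?_
  rw [add_div, Real.sqrt_div_self', one_div]

lemma tendsto_comp_mul_div_sum_Icc {β : ℕ → ℝ} (hβ : Monotone β) (hβ₁ : 0 < β 1)
    (hβ_div : Tendsto (fun n : ℕ => β n / n) atTop (𝓝 0)) {k : ℕ} (hk : 1 ≤ k) :
    Tendsto (fun j : ℕ => β (j * k) / ∑ i ∈ Finset.Icc 1 j, β i) atTop (𝓝 0) := by
  have hβ_nonneg : ∀ n, 1 ≤ n → 0 ≤ β n := fun n hn => hβ₁.le.trans (hβ hn)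
  have hbound : Tendsto (fun j : ℕ => β (j * k) / j / β 1) atTop (𝓝 0) := by
    have := ((hβ_div.comp (tendsto_id.atTop_mul_const' hk)).const_mul (k : ℝ)).div_const (β 1)
    rw [mul_zero, zero_div] at this
    refine this.congr' ?_
    filter_upwards [eventually_ge_atTop 1] with j hj
    simp only [Function.comp, id, Nat.cast_mul]
    field_simp
  refine squeeze_zero' ?_ ?_ hbound
  · filter_upwards [eventually_ge_atTop 1] with j hj
    exact div_nonneg (hβ_nonneg _ (Nat.one_le_iff_ne_zero.2 (by positivity)))
      (Finset.sum_nonneg fun i hi => hβ_nonneg i (Finset.mem_Icc.1 hi).1)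
  · filter_upwards [eventually_ge_atTop 1] with j hj
    have hsum : j * β 1 ≤ ∑ i ∈ Finset.Icc 1 j, β i := by
      simpa using Finset.card_nsmul_le_sum (Finset.Icc 1 j) β (β 1)
        fun i hi => hβ (Finset.mem_Icc.1 hi).1
    rw [div_div]
    exact div_le_div_of_nonneg_left (hβ_nonneg _ (Nat.one_le_iff_ne_zero.2 (by positivity)))
      (by positivity) hsum

lemma exists_precision_seq (F : ℝ → ℝ) :
    ∃ b : ℝ, ∀ β : ℕ → ℝ, Monotone β → Tendsto β atTop atTop → (∀ j, b ≤ β j) →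
      ∃ u : ℕ → ℝ, Antitone u ∧ (∀ j, 0 < u j ∧ u j < 1) ∧ Tendsto u atTop (𝓝 0) ∧
        (∀ j, F (u j) ≤ β j * u j) ∧ Tendsto (fun j => β j * u j) atTop atTop := by
  set v : ℕ → ℝ := fun m => ((m : ℝ) + 2)⁻¹
  set T : ℕ → ℝ := fun m => ((m : ℝ) + 2) * max (F (v m)) m
  have hT : ∀ m x, T m ≤ x → max (F (v m)) m ≤ x * v m := fun m x h =>
    (le_mul_inv_iff₀ (by positivity)).2 (by rwa [mul_comm])
  refine ⟨T 0, fun β hβ hβ_top hβT => ?_⟩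
  obtain ⟨m, hm, hm_top, hmβ⟩ := exists_monotone_tendsto_atTop_forall_le hβ hβ_top T hβT
  have hv_anti : Antitone v := fun a b hab => by
    simp only [v]; gcongr
  have hv_top : Tendsto (fun m : ℕ => (m : ℝ) + 2) atTop atTop :=
    tendsto_atTop_add_const_right _ 2 tendsto_natCast_atTop_atTop
  have hv_mem : ∀ n, 0 < v n ∧ v n < 1 := fun n =>
    ⟨by positivity, inv_lt_one_of_one_lt₀ (by linarith [n.cast_nonneg (α := ℝ)])⟩
  refine ⟨v ∘ m, hv_anti.comp_monotone hm, fun j => hv_mem (m j),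
    tendsto_inv_atTop_zero.comp (hv_top.comp hm_top),
    fun j => (le_max_left _ _).trans (hT _ _ (hmβ j)), ?_⟩
  exact tendsto_atTop_mono (fun j => (le_max_right _ _).trans (hT _ _ (hmβ j)))
    (tendsto_natCast_atTop_atTop.comp hm_top)

/-- For any function `C : ℝ → ℝ` and any `γ₀ > 0` there exist sequences
`(β_j)_{j≥1}` nondecreasing, positive, tending to `∞`, and `(u_j)_{j≥1}` nonincreasing with
`0 < u_j < 1` tending to `0`, such that `β_{j+1} − β_j → 0`, for each fixed `k ≥ 1` one has
`β_{jk} / ∑_{i=1}^j β_i → 0`, `C(u_j) ≤ exp(γ₀ β_j u_j)` for every `j ≥ 1`, and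
`β_j u_j → ∞`. -/
theorem stmt_7 (C : ℝ → ℝ) (γ₀ : ℝ) (hγ₀ : 0 < γ₀) :
    ∃ β u : ℕ → ℝ,
      ((∀ j k : ℕ, 1 ≤ j → j ≤ k → β j ≤ β k) ∧ (∀ j : ℕ, 1 ≤ j → 0 < β j) ∧
        Tendsto β atTop atTop) ∧
      ((∀ j k : ℕ, 1 ≤ j → j ≤ k → u k ≤ u j) ∧ (∀ j : ℕ, 1 ≤ j → 0 < u j ∧ u j < 1) ∧
        Tendsto u atTop (𝓝 0)) ∧
      Tendsto (fun j : ℕ => β (j + 1) - β j) atTop (𝓝 0) ∧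
      (∀ k : ℕ, 1 ≤ k →
        Tendsto (fun j : ℕ => β (j * k) / ∑ i ∈ Finset.Icc 1 j, β i) atTop (𝓝 0)) ∧
      (∀ j : ℕ, 1 ≤ j → C (u j) ≤ Real.exp (γ₀ * β j * u j)) ∧
      Tendsto (fun j : ℕ => β j * u j) atTop atTop := by
  obtain ⟨b, hb⟩ := exists_precision_seq fun x => Real.log (C x) / γ₀
  set β : ℕ → ℝ := fun j => √(j : ℝ) + max b 0
  have hβ : Monotone β := fun j k hjk => by simp only [β]; gcongr
  have hβ_top : Tendsto β atTop atTop :=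
    tendsto_atTop_add_const_right _ _ tendsto_sqrt_natCast_atTop
  have hβ_pos : ∀ j, 1 ≤ j → 0 < β j := fun j hj =>
    add_pos_of_pos_of_nonneg (Real.sqrt_pos.2 (by exact_mod_cast hj)) (le_max_right _ _)
  obtain ⟨u, hu, hu_mem, hu_zero, hu_log, hβu⟩ :=
    hb β hβ hβ_top fun j => (le_max_left b 0).trans (le_add_of_nonneg_left (Real.sqrt_nonneg _))
  refine ⟨β, u, ⟨fun j k _ hjk => hβ hjk, hβ_pos, hβ_top⟩,
    ⟨fun j k _ hjk => hu hjk, fun j _ => hu_mem j, hu_zero⟩, ?_,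
    fun k hk => tendsto_comp_mul_div_sum_Icc hβ (hβ_pos 1 le_rfl)
      (tendsto_sqrt_add_const_div_self _) hk, fun j _ => ?_, hβu⟩
  · simpa only [β, add_sub_add_right_eq_sub] using tendsto_sqrt_succ_sub_sqrt
  · calc C (u j) ≤ Real.exp (Real.log (C (u j))) := Real.le_exp_log _
      _ ≤ Real.exp (γ₀ * β j * u j) := by
        rw [Real.exp_le_exp, mul_assoc, ← div_le_iff₀' hγ₀]
        exact hu_log j
end

section
/- Fix κ > 0 and a ∈ ℝ with a < (4+κ)²/(8κ). Set Δ := (4+κ)² − 8aκ (which is positive), s*(a) := −1 + (4+κ)/√Δ, and α_κ(s) := (4+κ)²·s² / (8κ·(1+s)) for s > −1. Then s*(a) > −1, and for every s > −1: α_κ(s) − a·s ≥ α_κ(s*(a)) − a·s*(a) = −((4+κ) − √Δ)² / (8κ) = a − (4+κ)·((4+κ) − √Δ) / (4κ), with equality if and only if s = s*(a). In particular, the infimum of α_κ(s) − a·s over s > −1 is attained uniquely at s*(a) and equals a − (4+κ)·((4+κ) − √Δ)/(4κ). -/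
/-!
With `r = √Δ`, completing the square gives
`α_κ(s) − a·s + ((4+κ) − r)²/(8κ) = ((4+κ) − r(1+s))² / (8κ(1+s))`.
For `s > −1` the right-hand side is nonnegative and vanishes exactly when `r(1+s) = 4+κ`,
i.e. at `s = s*(a)`.
-/

/-- The one-point exponent `α_κ(s) = (4+κ)²s²/(8κ(1+s))`. -/
noncomputable def alphaFn (κ s : ℝ) : ℝ := (4 + κ) ^ 2 * s ^ 2 / (8 * κ * (1 + s))

section CompletingTheSquare

variable {κ a s r : ℝ}

theorem alphaFn_sub_mul_add_sq_eq (hκ : κ ≠ 0) (hs : 1 + s ≠ 0)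
    (hr : r ^ 2 = (4 + κ) ^ 2 - 8 * a * κ) :
    alphaFn κ s - a * s + ((4 + κ) - r) ^ 2 / (8 * κ)
      = ((4 + κ) - r * (1 + s)) ^ 2 / (8 * κ * (1 + s)) := by
  unfold alphaFn
  field_simp
  linear_combination (-(s * (1 + s))) * hr

theorem neg_sq_div_le_alphaFn_sub_mul (hκ : 0 < κ) (hs : -1 < s)
    (hr : r ^ 2 = (4 + κ) ^ 2 - 8 * a * κ) :
    -((4 + κ) - r) ^ 2 / (8 * κ) ≤ alphaFn κ s - a * s := by
  have h1s : 0 < 1 + s := by linarith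
  have hsq := alphaFn_sub_mul_add_sq_eq hκ.ne' h1s.ne' hr
  have : 0 ≤ ((4 + κ) - r * (1 + s)) ^ 2 / (8 * κ * (1 + s)) := by positivity
  rw [neg_div]
  linarith

theorem alphaFn_sub_mul_eq_neg_sq_div_iff (hκ : 0 < κ) (hs : -1 < s)
    (hr : r ^ 2 = (4 + κ) ^ 2 - 8 * a * κ) :
    alphaFn κ s - a * s = -((4 + κ) - r) ^ 2 / (8 * κ) ↔ r * (1 + s) = 4 + κ := by
  have h1s : 0 < 1 + s := by linarith
  have hsq := alphaFn_sub_mul_add_sq_eq hκ.ne' h1s.ne' hr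
  rw [neg_div, ← add_eq_zero_iff_eq_neg, hsq, div_eq_zero_iff, sq_eq_zero_iff, sub_eq_zero,
    eq_comm]
  have : 8 * κ * (1 + s) ≠ 0 := by positivity
  simp only [this, or_false]

end CompletingTheSquare

/-- Fix `κ > 0` and `a < (4+κ)²/(8κ)`. With `Δ = (4+κ)² − 8aκ > 0` and
`s*(a) = −1 + (4+κ)/√Δ`, the function `s ↦ α_κ(s) − a·s` on `(−1,∞)` attains its infimum
uniquely at `s*(a)`, equal to `−((4+κ)−√Δ)²/(8κ) = a − (4+κ)((4+κ)−√Δ)/(4κ)`. -/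
theorem stmt_11 (κ a : ℝ) (hκ : 0 < κ) (ha : a < (4 + κ) ^ 2 / (8 * κ)) :
    let Δ : ℝ := (4 + κ) ^ 2 - 8 * a * κ
    let sStar : ℝ := -1 + (4 + κ) / Real.sqrt Δ
    0 < Δ ∧
    -1 < sStar ∧
    (∀ s : ℝ, -1 < s → alphaFn κ sStar - a * sStar ≤ alphaFn κ s - a * s) ∧
    alphaFn κ sStar - a * sStar = -((4 + κ) - Real.sqrt Δ) ^ 2 / (8 * κ) ∧
    alphaFn κ sStar - a * sStar = a - (4 + κ) * ((4 + κ) - Real.sqrt Δ) / (4 * κ) ∧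
    (∀ s : ℝ, -1 < s →
      (alphaFn κ s - a * s = alphaFn κ sStar - a * sStar ↔ s = sStar)) := by
  intro Δ sStar
  have hΔ : 0 < Δ := by
    have := (lt_div_iff₀ (by positivity : (0 : ℝ) < 8 * κ)).mp ha
    simp only [Δ]
    linarith
  set r := Real.sqrt Δ
  have hr0 : 0 < r := Real.sqrt_pos.mpr hΔ
  have hr : r ^ 2 = (4 + κ) ^ 2 - 8 * a * κ := Real.sq_sqrt hΔ.le
  have hsStar : -1 < sStar := by
    have : 0 < (4 + κ) / r := by positivity
    simp only [sStar]
    linarith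
  have hrsStar : r * (1 + sStar) = 4 + κ := by
    simp only [sStar]
    field_simp
    ring
  have hval := (alphaFn_sub_mul_eq_neg_sq_div_iff hκ hsStar hr).mpr hrsStar
  refine ⟨hΔ, hsStar, fun s hs => hval ▸ neg_sq_div_le_alphaFn_sub_mul hκ hs hr, hval, ?_, ?_⟩
  · rw [hval]
    field_simp
    linear_combination (-4) * hr
  · intro s hs
    rw [hval, alphaFn_sub_mul_eq_neg_sq_div_iff hκ hs hr, ← hrsStar]
    exact ⟨fun h => by linarith [mul_left_cancel₀ hr0.ne' h], fun h => h ▸ rfl⟩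
end

section
/- Let U ⊆ ℂ be open and let a ∈ U with |a| = 1. Let ξ : U → ℂ be holomorphic on U and suppose that |ξ(p)| = 1 for every p ∈ U with |p| = 1 (so in particular |ξ(a)| = 1). Then there exists a real number r such that ξ'(a) = r·ξ(a)/a; equivalently, a·ξ'(a)·conj(ξ(a)) is a real number. -/
/-!
Parametrize the circle through `a` by `γ θ = a * exp (θ I)`. Near `θ = 0` the curve `ξ ∘ γ` stays
on the unit circle, so its velocity `ξ'(a) · a I` is orthogonal to its position `ξ(a)`, i.e.
`Re (ξ'(a) · a I · conj ξ(a)) = 0`, which says that `a ξ'(a) conj ξ(a)` is real.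
-/

open Complex ComplexConjugate Filter Topology

open scoped RealInnerProductSpace in
theorem inner_eq_zero_of_hasDerivAt_of_norm_eventuallyEq {F : Type*} [NormedAddCommGroup F]
    [InnerProductSpace ℝ F] {f : ℝ → F} {f' : F} {t c : ℝ} (hf : HasDerivAt f f' t)
    (hc : (fun s ↦ ‖f s‖) =ᶠ[𝓝 t] fun _ ↦ c) : ⟪f t, f'⟫ = 0 := by
  have hconst : HasDerivAt (‖f ·‖ ^ 2) 0 t :=
    (hasDerivAt_const t (c ^ 2)).congr_of_eventuallyEq (hc.mono fun s hs ↦ by simp [hs])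
  simpa using hf.norm_sq.unique hconst

theorem Complex.hasDerivAt_mul_exp_ofReal_mul_I (a : ℂ) (θ : ℝ) :
    HasDerivAt (fun θ : ℝ ↦ a * exp (θ * I)) (a * exp (θ * I) * I) θ := by
  have h := ((hasDerivAt_id (θ : ℂ)).mul_const I).cexp.comp_ofReal.const_mul a
  simpa [mul_assoc] using h

theorem Complex.im_mul_deriv_mul_conj_eq_zero {ξ : ℂ → ℂ} {a : ℂ} {c : ℝ}
    (hξ : DifferentiableAt ℂ ξ a) (hc : ∀ᶠ z in 𝓝 a, ‖z‖ = ‖a‖ → ‖ξ z‖ = c) :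
    (a * deriv ξ a * conj (ξ a)).im = 0 := by
  set γ : ℝ → ℂ := fun θ ↦ a * exp (θ * I)
  have hγ : HasDerivAt γ (a * I) 0 := by
    simpa [γ] using hasDerivAt_mul_exp_ofReal_mul_I a 0
  have hγ0 : γ 0 = a := by simp [γ]
  have hnorm : ∀ θ, ‖γ θ‖ = ‖a‖ := fun θ ↦ by simp [γ, norm_exp_ofReal_mul_I]
  have hξγ : HasDerivAt (ξ ∘ γ) (deriv ξ a * (a * I)) 0 := by
    refine HasDerivAt.comp 0 ?_ hγ
    rw [hγ0]
    exact hξ.hasDerivAt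
  have htendsto : Tendsto γ (𝓝 0) (𝓝 a) := hγ0 ▸ hγ.continuousAt.tendsto
  have hcirc : (fun θ ↦ ‖(ξ ∘ γ) θ‖) =ᶠ[𝓝 0] fun _ ↦ c :=
    (htendsto.eventually hc).mono fun θ hθ ↦ hθ (hnorm θ)
  have horth := inner_eq_zero_of_hasDerivAt_of_norm_eventuallyEq hξγ hcirc
  rw [Function.comp_apply, hγ0, Complex.inner] at horth
  simp only [mul_re, mul_im, I_re, I_im, conj_re, conj_im] at horth ⊢
  linarith

/-- Let `U ⊆ ℂ` be open, `a ∈ U` with `|a| = 1`, and let `ξ : U → ℂ` be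
holomorphic, mapping the arc of the unit circle contained in `U` into the unit circle. Then
`ξ'(a)` is a real multiple of `ξ(a)/a`; equivalently `a·ξ'(a)·conj(ξ(a))` is real. -/
theorem stmt_13 (U : Set ℂ) (hU : IsOpen U) (a : ℂ) (haU : a ∈ U) (ha : ‖a‖ = 1)
    (ξ : ℂ → ℂ) (hξ_holo : DifferentiableOn ℂ ξ U)
    (hcirc : ∀ p ∈ U, ‖p‖ = 1 → ‖ξ p‖ = 1) :
    (∃ r : ℝ, deriv ξ a = (r : ℂ) * (ξ a / a)) ∧
    (∃ t : ℝ, a * deriv ξ a * (starRingEnd ℂ) (ξ a) = (t : ℂ)) := by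
  have hU_nhds : U ∈ 𝓝 a := hU.mem_nhds haU
  have him : (a * deriv ξ a * conj (ξ a)).im = 0 :=
    im_mul_deriv_mul_conj_eq_zero (hξ_holo.differentiableAt hU_nhds)
      (eventually_of_mem hU_nhds fun p hp hpa ↦ hcirc p hp (hpa.trans ha))
  set t : ℝ := (a * deriv ξ a * conj (ξ a)).re
  have ht : a * deriv ξ a * conj (ξ a) = t := Complex.ext (by simp [t]) (by simp [him])
  have hunit : ξ a * conj (ξ a) = 1 := by simp [mul_conj', hcirc a haU ha]
  have ha0 : a ≠ 0 := norm_ne_zero_iff.mp (ha ▸ one_ne_zero)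
  refine ⟨⟨t, ?_⟩, ⟨t, ht⟩⟩
  field_simp
  linear_combination ξ a * ht - a * deriv ξ a * hunit
end
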